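/- Let 1 < p < ∞, let F be a C² real function on an open subinterval of (0,∞), and let N(z,σ) = (|z|⁴ + 16|σ|²)^{1/4}. Then at every point x = (z,σ) with z ≠ 0, N(x) in the domain of F, and F'(N(x)) ≠ 0, one has Δ_{H,p}(F ∘ N)(x) = (p−1) (|F'(N)|^{p−2} / N^p) [ F''(N) + ((Q−1)/(p−1)) F'(N)/N ] |z|^p, where N = N(x) and Q = m + 2k. -/

import Mathlib

open scoped BigOperators
open Matrix

noncomputable section

variable {m k : ℕ}

/-- The ambient point space ℝ^m × ℝ^k. -/
abbrev Pt (m k : ℕ) := EuclideanSpace ℝ (Fin m) × EuclideanSpace ℝ (Fin k)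

/-- H-type (Clifford) condition on the matrices J_ℓ : skew-symmetry and
    J_ℓ J_{ℓ'} + J_{ℓ'} J_ℓ = -2 δ_{ℓℓ'} Id. -/
def HType (J : Fin k → Matrix (Fin m) (Fin m) ℝ) : Prop :=
  (∀ ℓ, (J ℓ)ᵀ = -(J ℓ)) ∧
  ∀ ℓ ℓ', J ℓ * J ℓ' + J ℓ' * J ℓ =
    (if ℓ = ℓ' then (-2 : ℝ) else 0) • (1 : Matrix (Fin m) (Fin m) ℝ)

/-- Horizontal derivative X_i f(z,σ) = ∂_{z_i} f + (1/2) Σ_ℓ (J_ℓ z)_i ∂_{σ_ℓ} f. -/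
def XD (J : Fin k → Matrix (Fin m) (Fin m) ℝ) (f : Pt m k → ℝ) (i : Fin m) (x : Pt m k) : ℝ :=
  fderiv ℝ f x (EuclideanSpace.single i 1, 0)
    + (1/2) * ∑ ℓ : Fin k, (∑ j : Fin m, J ℓ i j * x.1 j) *
        fderiv ℝ f x (0, EuclideanSpace.single ℓ 1)

/-- Squared length of the horizontal gradient. -/
def hGradSq (J : Fin k → Matrix (Fin m) (Fin m) ℝ) (f : Pt m k → ℝ) (x : Pt m k) : ℝ :=
  ∑ i : Fin m, (XD J f i x) ^ 2

/-- Length of the horizontal gradient. -/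
def hGradNorm (J : Fin k → Matrix (Fin m) (Fin m) ℝ) (f : Pt m k → ℝ) (x : Pt m k) : ℝ :=
  Real.sqrt (hGradSq J f x)

/-- Horizontal Laplacian Δ_H f = Σ X_i(X_i f). -/
def hLap (J : Fin k → Matrix (Fin m) (Fin m) ℝ) (f : Pt m k → ℝ) (x : Pt m k) : ℝ :=
  ∑ i : Fin m, XD J (XD J f i) i x

/-- Horizontal ∞-Laplacian Δ_{H,∞} f = (1/2) Σ X_i(|∇_H f|²) X_i f. -/
def hInfLap (J : Fin k → Matrix (Fin m) (Fin m) ℝ) (f : Pt m k → ℝ) (x : Pt m k) : ℝ :=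
  (1/2) * ∑ i : Fin m, XD J (hGradSq J f) i x * XD J f i x

/-- Horizontal p-Laplacian Δ_{H,p} f = Σ X_i(|∇_H f|^{p-2} X_i f). -/
def hPLap (J : Fin k → Matrix (Fin m) (Fin m) ℝ) (p : ℝ) (f : Pt m k → ℝ) (x : Pt m k) : ℝ :=
  ∑ i : Fin m, XD J (fun y => (hGradSq J f y) ^ ((p - 2) / 2) * XD J f i y) i x

/-- Korányi gauge N(z,σ) = (|z|⁴ + 16|σ|²)^{1/4}. -/
def gaugeN (x : Pt m k) : ℝ := (‖x.1‖ ^ 4 + 16 * ‖x.2‖ ^ 2) ^ ((1 : ℝ)/4)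

/-- ∂_ξ g for g : ℝ × ℝ^k → ℝ. -/
def gXi (g : ℝ × EuclideanSpace ℝ (Fin k) → ℝ) (y : ℝ × EuclideanSpace ℝ (Fin k)) : ℝ :=
  fderiv ℝ g y (1, 0)

/-- ∂_{σ_ℓ} g for g : ℝ × ℝ^k → ℝ. -/
def gS (g : ℝ × EuclideanSpace ℝ (Fin k) → ℝ) (ℓ : Fin k) (y : ℝ × EuclideanSpace ℝ (Fin k)) : ℝ :=
  fderiv ℝ g y (0, EuclideanSpace.single ℓ 1)

/-- |∇ g|² = g_ξ² + |∇_σ g|². -/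
def gGradSq (g : ℝ × EuclideanSpace ℝ (Fin k) → ℝ) (y : ℝ × EuclideanSpace ℝ (Fin k)) : ℝ :=
  (gXi g y) ^ 2 + ∑ ℓ : Fin k, (gS g ℓ y) ^ 2

/-- g_{ξξ}. -/
def gXiXi (g : ℝ × EuclideanSpace ℝ (Fin k) → ℝ) (y : ℝ × EuclideanSpace ℝ (Fin k)) : ℝ :=
  fderiv ℝ (gXi g) y (1, 0)

/-- Δ_σ g. -/
def gLapS (g : ℝ × EuclideanSpace ℝ (Fin k) → ℝ) (y : ℝ × EuclideanSpace ℝ (Fin k)) : ℝ :=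
  ∑ ℓ : Fin k, fderiv ℝ (gS g ℓ) y (0, EuclideanSpace.single ℓ 1)

/-- Euclidean ∞-Laplacian Δ_∞ g = (1/2)⟨∇(|∇g|²), ∇g⟩ on ℝ × ℝ^k. -/
def gInf (g : ℝ × EuclideanSpace ℝ (Fin k) → ℝ) (y : ℝ × EuclideanSpace ℝ (Fin k)) : ℝ :=
  (1/2) * (fderiv ℝ (gGradSq g) y (1, 0) * gXi g y
    + ∑ ℓ : Fin k, fderiv ℝ (gGradSq g) y (0, EuclideanSpace.single ℓ 1) * gS g ℓ y)

/-!
For `u = F ∘ N` the product and chain rules for the derivations `X_i` give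
`Δ_{H,p} u = |∇_H u|^{p-2} (Δ_H u + (p-2) Δ_{H,∞} u / |∇_H u|²)`, together with
`|∇_H u|² = F'² |∇_H N|²`, `Δ_H u = F'' |∇_H N|² + F' Δ_H N` and
`Δ_{H,∞} u = F'² F'' |∇_H N|⁴ + F'³ Δ_{H,∞} N`.
For the gauge, `X_i N = w_i / N³` with `w = |z|² z + 4 Σ_ℓ σ_ℓ J_ℓ z`, and the Clifford relations
give `|Σ_ℓ σ_ℓ J_ℓ z| = |σ| |z|` and `⟨J_ℓ z, z⟩ = 0`, hence `|w|² = |z|² N⁴` and `⟨z, w⟩ = |z|⁴`.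
Therefore `|∇_H N|² = |z|²/N²`, `Δ_H N = (Q-1)|z|²/N³`, and `N` is `∞`-harmonic, `Δ_{H,∞} N = 0`.
-/

open Filter Topology WithLp

namespace HType

variable {J : Fin k → Matrix (Fin m) (Fin m) ℝ}

theorem diag_eq_zero (hJ : HType J) (ℓ : Fin k) (i : Fin m) : J ℓ i i = 0 := by
  have h := congrFun (congrFun (hJ.1 ℓ) i) i
  rw [transpose_apply, neg_apply] at h
  linarith

theorem transpose_mulVec (hJ : HType J) (ℓ : Fin k) (v : Fin m → ℝ) :
    (J ℓ)ᵀ *ᵥ v = -(J ℓ *ᵥ v) := by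
  rw [hJ.1 ℓ, neg_mulVec]

theorem mulVec_dotProduct_self (hJ : HType J) (ℓ : Fin k) (v : Fin m → ℝ) :
    (J ℓ *ᵥ v) ⬝ᵥ v = 0 := by
  have h : (J ℓ *ᵥ v) ⬝ᵥ v = -((J ℓ *ᵥ v) ⬝ᵥ v) := by
    conv_lhs => rw [← vecMul_transpose, ← dotProduct_mulVec, hJ.transpose_mulVec, dotProduct_neg]
    rw [dotProduct_comm]
  linarith

theorem mulVec_dotProduct_mulVec (hJ : HType J) (ℓ ℓ' : Fin k) (v : Fin m → ℝ) :
    (J ℓ *ᵥ v) ⬝ᵥ (J ℓ' *ᵥ v) = if ℓ = ℓ' then v ⬝ᵥ v else 0 := by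
  have h (a b : Fin k) : (J a *ᵥ v) ⬝ᵥ (J b *ᵥ v) = -(v ⬝ᵥ ((J a * J b) *ᵥ v)) := by
    rw [← vecMul_transpose, ← dotProduct_mulVec, ← mulVec_mulVec, hJ.transpose_mulVec,
      dotProduct_neg]
  have hsum := congrArg (fun M => v ⬝ᵥ (M *ᵥ v)) (hJ.2 ℓ ℓ')
  simp only [add_mulVec, dotProduct_add, smul_mulVec, one_mulVec, dotProduct_smul,
    smul_eq_mul] at hsum
  have h2 := h ℓ' ℓ
  rw [dotProduct_comm] at h2
  split_ifs at hsum ⊢ <;> linarith [h ℓ ℓ']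

theorem sum_smul_mulVec_dotProduct_self (hJ : HType J) (a : Fin k → ℝ) (v : Fin m → ℝ) :
    (∑ ℓ, a ℓ • J ℓ *ᵥ v) ⬝ᵥ v = 0 := by
  simp [sum_dotProduct, smul_dotProduct, hJ.mulVec_dotProduct_self]

theorem sum_smul_mulVec_dotProduct_sum_smul_mulVec (hJ : HType J) (a : Fin k → ℝ)
    (v : Fin m → ℝ) :
    (∑ ℓ, a ℓ • J ℓ *ᵥ v) ⬝ᵥ (∑ ℓ, a ℓ • J ℓ *ᵥ v) = (a ⬝ᵥ a) * (v ⬝ᵥ v) := by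
  simp only [sum_dotProduct, dotProduct_sum, smul_dotProduct, dotProduct_smul,
    hJ.mulVec_dotProduct_mulVec, smul_eq_mul, mul_ite, mul_zero, Finset.sum_ite_eq',
    Finset.mem_univ, if_true]
  simp only [dotProduct, Finset.sum_mul, mul_assoc]

end HType

theorem ofLp_dotProduct_self (z : EuclideanSpace ℝ (Fin m)) : ofLp z ⬝ᵥ ofLp z = ‖z‖ ^ 2 := by
  rw [EuclideanSpace.real_norm_sq_eq]
  simp [dotProduct, sq]

/-- The vector `w` with `X_i N = w_i / N³` (`XD_gaugeN`). -/
def gaugeW (J : Fin k → Matrix (Fin m) (Fin m) ℝ) (y : Pt m k) : Fin m → ℝ :=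
  ‖y.1‖ ^ 2 • ofLp y.1 + (4 : ℝ) • ∑ ℓ, y.2 ℓ • J ℓ *ᵥ ofLp y.1

theorem gaugeW_apply (J : Fin k → Matrix (Fin m) (Fin m) ℝ) (y : Pt m k) (i : Fin m) :
    gaugeW J y i = ‖y.1‖ ^ 2 * y.1 i + 4 * ∑ ℓ, y.2 ℓ * (J ℓ *ᵥ ofLp y.1) i := by
  simp [gaugeW, Finset.sum_apply]

section GaugeW

variable {J : Fin k → Matrix (Fin m) (Fin m) ℝ}

theorem gaugeN_pow_four (y : Pt m k) : gaugeN y ^ 4 = ‖y.1‖ ^ 4 + 16 * ‖y.2‖ ^ 2 := by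
  rw [gaugeN, one_div, ← Real.rpow_natCast, ← Real.rpow_mul (by positivity)]
  norm_num

theorem sum_fst_mul_gaugeW (hJ : HType J) (y : Pt m k) :
    ∑ i, y.1 i * gaugeW J y i = ‖y.1‖ ^ 4 := by
  change ofLp y.1 ⬝ᵥ gaugeW J y = _
  rw [gaugeW, dotProduct_add, dotProduct_smul, dotProduct_smul, dotProduct_comm (ofLp y.1) (∑ _, _),
    hJ.sum_smul_mulVec_dotProduct_self, ofLp_dotProduct_self]
  simp only [smul_eq_mul]
  ring

theorem gaugeW_dotProduct_self (hJ : HType J) (y : Pt m k) :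
    gaugeW J y ⬝ᵥ gaugeW J y = ‖y.1‖ ^ 2 * (‖y.1‖ ^ 4 + 16 * ‖y.2‖ ^ 2) := by
  have hz := hJ.sum_smul_mulVec_dotProduct_self (ofLp y.2) (ofLp y.1)
  have hσ := hJ.sum_smul_mulVec_dotProduct_sum_smul_mulVec (ofLp y.2) (ofLp y.1)
  rw [ofLp_dotProduct_self y.1, ofLp_dotProduct_self y.2] at hσ
  simp only [gaugeW, dotProduct_add, add_dotProduct, dotProduct_smul, smul_dotProduct,
    smul_eq_mul, ofLp_dotProduct_self y.1]
  rw [dotProduct_comm (ofLp y.1) (∑ _, _), hz, hσ]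
  ring

theorem sum_gaugeW_sq (hJ : HType J) (y : Pt m k) :
    ∑ i, gaugeW J y i ^ 2 = ‖y.1‖ ^ 2 * gaugeN y ^ 4 := by
  rw [gaugeN_pow_four, ← gaugeW_dotProduct_self hJ]
  simp [dotProduct, sq]

end GaugeW

@[fun_prop] theorem differentiableAt_fst_apply (j : Fin m) (x : Pt m k) :
    DifferentiableAt ℝ (fun y : Pt m k => y.1 j) x :=
  show DifferentiableAt ℝ ((EuclideanSpace.proj j).comp (ContinuousLinearMap.fst ℝ _ _) :
    Pt m k →L[ℝ] ℝ) x from ContinuousLinearMap.differentiableAt _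

@[fun_prop] theorem differentiableAt_snd_apply (ℓ : Fin k) (x : Pt m k) :
    DifferentiableAt ℝ (fun y : Pt m k => y.2 ℓ) x :=
  show DifferentiableAt ℝ ((EuclideanSpace.proj ℓ).comp (ContinuousLinearMap.snd ℝ _ _) :
    Pt m k →L[ℝ] ℝ) x from ContinuousLinearMap.differentiableAt _

@[fun_prop] theorem differentiableAt_norm_fst_sq (x : Pt m k) :
    DifferentiableAt ℝ (fun y : Pt m k => ‖y.1‖ ^ 2) x :=
  differentiable_fst.norm_sq ℝ x

@[fun_prop] theorem differentiableAt_norm_snd_sq (x : Pt m k) :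
    DifferentiableAt ℝ (fun y : Pt m k => ‖y.2‖ ^ 2) x :=
  differentiable_snd.norm_sq ℝ x

@[fun_prop] theorem differentiableAt_mulVec_fst_apply (A : Matrix (Fin m) (Fin m) ℝ) (j : Fin m)
    (x : Pt m k) : DifferentiableAt ℝ (fun y : Pt m k => (A *ᵥ ofLp y.1) j) x := by
  change DifferentiableAt ℝ (fun y : Pt m k => ∑ i, A j i * y.1 i) x
  fun_prop

def horizontalVec (J : Fin k → Matrix (Fin m) (Fin m) ℝ) (i : Fin m) (x : Pt m k) : Pt m k :=
  (EuclideanSpace.single i 1, toLp 2 fun ℓ => (1 / 2) * ∑ j, J ℓ i j * x.1 j)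

section HorizontalCalculus

variable {J : Fin k → Matrix (Fin m) (Fin m) ℝ} {f g : Pt m k → ℝ} {i : Fin m} {x : Pt m k}

theorem XD_eq_fderiv : XD J f i x = fderiv ℝ f x (horizontalVec J i x) := by
  have hdecomp : horizontalVec J i x = (EuclideanSpace.single i 1, 0) +
      ∑ ℓ, ((1 / 2) * ∑ j, J ℓ i j * x.1 j) • ((0, EuclideanSpace.single ℓ 1) : Pt m k) := by
    ext j
    · simp [horizontalVec, Prod.fst_sum]
    · simp [horizontalVec, Prod.snd_sum, Pi.single_apply]
  rw [hdecomp, map_add, map_sum]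
  simp only [XD, map_smul, smul_eq_mul]
  rw [Finset.mul_sum]
  congr 1
  exact Finset.sum_congr rfl fun ℓ _ => by ring

theorem XD_congr (h : f =ᶠ[𝓝 x] g) : XD J f i x = XD J g i x := by
  simp only [XD_eq_fderiv, h.fderiv_eq]

theorem XD_add (hf : DifferentiableAt ℝ f x) (hg : DifferentiableAt ℝ g x) :
    XD J (fun y => f y + g y) i x = XD J f i x + XD J g i x := by
  simp [XD_eq_fderiv, fderiv_fun_add hf hg]

theorem XD_mul (hf : DifferentiableAt ℝ f x) (hg : DifferentiableAt ℝ g x) :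
    XD J (fun y => f y * g y) i x = f x * XD J g i x + g x * XD J f i x := by
  simp [XD_eq_fderiv, fderiv_fun_mul hf hg]

theorem XD_const_mul (hf : DifferentiableAt ℝ f x) (c : ℝ) :
    XD J (fun y => c * f y) i x = c * XD J f i x := by
  simp [XD_eq_fderiv, fderiv_const_mul hf]

theorem XD_sum {ι : Type*} (s : Finset ι) {f : ι → Pt m k → ℝ}
    (hf : ∀ a ∈ s, DifferentiableAt ℝ (f a) x) :
    XD J (fun y => ∑ a ∈ s, f a y) i x = ∑ a ∈ s, XD J (f a) i x := by
  simp [XD_eq_fderiv, fderiv_fun_sum hf]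

theorem XD_comp {φ : ℝ → ℝ} (hφ : DifferentiableAt ℝ φ (f x)) (hf : DifferentiableAt ℝ f x) :
    XD J (fun y => φ (f y)) i x = deriv φ (f x) * XD J f i x := by
  simp [XD_eq_fderiv, fderiv_fun_comp x hφ hf, fderiv_eq_smul_deriv, mul_comm]

theorem XD_div (hf : DifferentiableAt ℝ f x) (hg : DifferentiableAt ℝ g x) (hg0 : g x ≠ 0) :
    XD J (fun y => f y / g y) i x = (XD J f i x * g x - f x * XD J g i x) / g x ^ 2 := by
  simp only [div_eq_mul_inv]
  rw [XD_mul (g := fun y => (g y)⁻¹) hf (hg.inv hg0), XD_comp (differentiableAt_inv hg0) hg,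
    deriv_inv]
  field_simp
  ring

theorem XD_pow (hf : DifferentiableAt ℝ f x) (n : ℕ) :
    XD J (fun y => f y ^ n) i x = n * f x ^ (n - 1) * XD J f i x := by
  rw [XD_comp (differentiableAt_pow n) hf]
  simp

theorem XD_fst_apply (j : Fin m) : XD J (fun y => y.1 j) i x = if j = i then 1 else 0 := by
  show XD J ((EuclideanSpace.proj j).comp (ContinuousLinearMap.fst ℝ _ _) : Pt m k →L[ℝ] ℝ) i x = _
  rw [XD_eq_fderiv, ContinuousLinearMap.fderiv]
  simp [horizontalVec]

theorem XD_snd_apply (ℓ : Fin k) :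
    XD J (fun y => y.2 ℓ) i x = (1 / 2) * (J ℓ *ᵥ ofLp x.1) i := by
  show XD J ((EuclideanSpace.proj ℓ).comp (ContinuousLinearMap.snd ℝ _ _) : Pt m k →L[ℝ] ℝ) i x = _
  rw [XD_eq_fderiv, ContinuousLinearMap.fderiv]
  simp [horizontalVec]
  rfl

theorem XD_norm_fst_sq : XD J (fun y => ‖y.1‖ ^ 2) i x = 2 * x.1 i := by
  rw [XD_eq_fderiv, (hasFDerivAt_fst.norm_sq).fderiv]
  simp [horizontalVec, EuclideanSpace.inner_single_right]

theorem XD_norm_snd_sq : XD J (fun y => ‖y.2‖ ^ 2) i x = ∑ ℓ, x.2 ℓ * (J ℓ *ᵥ ofLp x.1) i := by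
  rw [XD_eq_fderiv, (hasFDerivAt_snd.norm_sq).fderiv]
  simp [horizontalVec, PiLp.inner_apply, mulVec, dotProduct]
  rw [Finset.mul_sum]
  exact Finset.sum_congr rfl fun ℓ _ => by ring

theorem XD_mulVec_fst_apply (A : Matrix (Fin m) (Fin m) ℝ) (j : Fin m) :
    XD J (fun y => (A *ᵥ ofLp y.1) j) i x = A j i := by
  change XD J (fun y => ∑ l, A j l * y.1 l) i x = _
  rw [XD_sum _ fun _ _ => by fun_prop]
  simp (disch := fun_prop) [XD_const_mul, XD_fst_apply]

end HorizontalCalculus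

section GaugeDerivatives

variable {J : Fin k → Matrix (Fin m) (Fin m) ℝ} {i : Fin m} {x : Pt m k}

theorem XD_gaugeW_self (hJ : HType J) :
    XD J (fun y => gaugeW J y i) i x =
      ‖x.1‖ ^ 2 + 2 * x.1 i ^ 2 + 2 * ∑ ℓ, (J ℓ *ᵥ ofLp x.1) i ^ 2 := by
  simp only [gaugeW_apply]
  rw [XD_add (by fun_prop) (by fun_prop), XD_mul (by fun_prop) (by fun_prop),
    XD_const_mul (by fun_prop), XD_sum _ fun _ _ => by fun_prop,
    Finset.sum_congr rfl fun ℓ _ => XD_mul (by fun_prop) (by fun_prop)]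
  simp only [XD_norm_fst_sq, XD_fst_apply, XD_snd_apply, XD_mulVec_fst_apply, hJ.diag_eq_zero,
    if_true, mul_one, mul_zero, zero_add]
  rw [Finset.mul_sum, Finset.mul_sum]
  congr 1
  · ring
  · exact Finset.sum_congr rfl fun _ _ => by ring

theorem sum_XD_gaugeW_self (hJ : HType J) :
    ∑ i, XD J (fun y => gaugeW J y i) i x = (m + 2 * k + 2) * ‖x.1‖ ^ 2 := by
  have hJz (ℓ : Fin k) : ∑ i, (J ℓ *ᵥ ofLp x.1) i ^ 2 = ‖x.1‖ ^ 2 := by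
    have h := hJ.mulVec_dotProduct_mulVec ℓ ℓ (ofLp x.1)
    rw [if_pos rfl, ofLp_dotProduct_self x.1] at h
    rw [← h]
    simp [dotProduct, sq]
  rw [Finset.sum_congr rfl fun i _ => XD_gaugeW_self hJ]
  simp only [Finset.sum_add_distrib, ← Finset.mul_sum]
  rw [Finset.sum_comm, Finset.sum_congr rfl fun ℓ _ => hJz ℓ, ← EuclideanSpace.real_norm_sq_eq]
  simp only [Finset.sum_const, Finset.card_univ, Fintype.card_fin, nsmul_eq_mul]
  ring

theorem gaugeN_pos {y : Pt m k} (hy : y ≠ 0) : 0 < gaugeN y := by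
  have hρ : 0 < ‖y.1‖ ^ 4 + 16 * ‖y.2‖ ^ 2 := by
    rcases (not_and_or.1 fun h => hy (Prod.ext h.1 h.2)) with h | h
    · exact add_pos_of_pos_of_nonneg (pow_pos (norm_pos_iff.2 h) 4) (by positivity)
    · exact add_pos_of_nonneg_of_pos (by positivity) (by positivity [norm_pos_iff.2 h])
  exact Real.rpow_pos_of_pos hρ _

theorem gaugeN_eq :
    (gaugeN : Pt m k → ℝ) = fun y => ((‖y.1‖ ^ 2) ^ 2 + 16 * ‖y.2‖ ^ 2) ^ ((1 : ℝ) / 4) := by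
  funext y
  rw [gaugeN]
  ring_nf

theorem differentiableAt_gaugeN {y : Pt m k} (hy : y ≠ 0) : DifferentiableAt ℝ gaugeN y := by
  have hρ : ‖y.1‖ ^ 4 + 16 * ‖y.2‖ ^ 2 ≠ 0 := by
    rw [← gaugeN_pow_four]; exact (pow_pos (gaugeN_pos hy) 4).ne'
  rw [gaugeN_eq]
  exact DifferentiableAt.rpow_const (by fun_prop) (Or.inl (by rwa [← pow_mul]))

theorem XD_gaugeN {y : Pt m k} (hy : y ≠ 0) :
    XD J gaugeN i y = gaugeW J y i / gaugeN y ^ 3 := by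
  have hN := gaugeN_pos hy
  have hρ : (‖y.1‖ ^ 2) ^ 2 + 16 * ‖y.2‖ ^ 2 = gaugeN y ^ 4 := by
    rw [gaugeN_pow_four]; ring
  have hρN : ((‖y.1‖ ^ 2) ^ 2 + 16 * ‖y.2‖ ^ 2) ^ ((1 : ℝ) / 4) = gaugeN y := by
    rw [gaugeN_eq]
  conv_lhs => rw [gaugeN_eq]
  rw [XD_comp (φ := fun t => t ^ ((1 : ℝ) / 4))
    (Real.hasDerivAt_rpow_const (Or.inl (by rw [hρ]; positivity))).differentiableAt (by fun_prop),
    Real.deriv_rpow_const, XD_add (by fun_prop) (by fun_prop), XD_pow (by fun_prop),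
    XD_const_mul (by fun_prop), XD_norm_fst_sq, XD_norm_snd_sq, gaugeW_apply,
    Real.rpow_sub_one (by rw [hρ]; positivity), hρN, hρ]
  field_simp
  ring

theorem differentiableAt_gaugeW_apply : DifferentiableAt ℝ (fun y => gaugeW J y i) x := by
  simp only [gaugeW_apply]
  fun_prop

theorem XD_gaugeN_eventuallyEq (hx : x ≠ 0) :
    XD J gaugeN i =ᶠ[𝓝 x] fun y => gaugeW J y i / gaugeN y ^ 3 := by
  filter_upwards [isOpen_ne.mem_nhds hx] with y hy using XD_gaugeN hy

theorem differentiableAt_XD_gaugeN (hx : x ≠ 0) : DifferentiableAt ℝ (XD J gaugeN i) x := by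
  refine DifferentiableAt.congr_of_eventuallyEq ?_ (XD_gaugeN_eventuallyEq hx)
  simpa only [div_eq_mul_inv] using differentiableAt_gaugeW_apply.fun_mul
    (((differentiableAt_gaugeN hx).fun_pow 3).fun_inv (pow_ne_zero 3 (gaugeN_pos hx).ne'))

theorem hGradSq_gaugeN (hJ : HType J) {y : Pt m k} (hy : y ≠ 0) :
    hGradSq J gaugeN y = ‖y.1‖ ^ 2 / gaugeN y ^ 2 := by
  have hN := gaugeN_pos hy
  simp only [hGradSq, XD_gaugeN hy, div_pow, ← Finset.sum_div, sum_gaugeW_sq hJ]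
  field_simp

theorem hLap_gaugeN (hJ : HType J) (hx : x ≠ 0) :
    hLap J gaugeN x = (m + 2 * k - 1) * ‖x.1‖ ^ 2 / gaugeN x ^ 3 := by
  have hN := gaugeN_pos hx
  have hterm (i : Fin m) : XD J (XD J gaugeN i) i x =
      XD J (fun y => gaugeW J y i) i x / gaugeN x ^ 3 - 3 * gaugeW J x i ^ 2 / gaugeN x ^ 7 := by
    rw [XD_congr (XD_gaugeN_eventuallyEq hx), XD_div differentiableAt_gaugeW_apply
      ((differentiableAt_gaugeN hx).fun_pow 3) (by positivity), XD_pow (differentiableAt_gaugeN hx),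
      XD_gaugeN hx]
    field_simp
    ring
  rw [hLap, Finset.sum_congr rfl fun i _ => hterm i, Finset.sum_sub_distrib, ← Finset.sum_div,
    ← Finset.sum_div, ← Finset.mul_sum, sum_XD_gaugeW_self hJ, sum_gaugeW_sq hJ]
  field_simp
  ring

theorem hInfLap_gaugeN (hJ : HType J) (hx : x ≠ 0) : hInfLap J gaugeN x = 0 := by
  have hN := gaugeN_pos hx
  have hG : hGradSq J gaugeN =ᶠ[𝓝 x] fun y => ‖y.1‖ ^ 2 / gaugeN y ^ 2 := by
    filter_upwards [isOpen_ne.mem_nhds hx] with y hy using hGradSq_gaugeN hJ hy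
  have hterm (i : Fin m) : XD J (hGradSq J gaugeN) i x * XD J gaugeN i x =
      2 * (x.1 i * gaugeW J x i) / gaugeN x ^ 5 -
        2 * ‖x.1‖ ^ 2 * gaugeW J x i ^ 2 / gaugeN x ^ 9 := by
    rw [XD_congr hG, XD_div (by fun_prop) ((differentiableAt_gaugeN hx).fun_pow 2) (by positivity),
      XD_pow (differentiableAt_gaugeN hx), XD_norm_fst_sq, XD_gaugeN hx]
    field_simp
    ring
  rw [hInfLap, Finset.sum_congr rfl fun i _ => hterm i, Finset.sum_sub_distrib, ← Finset.sum_div,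
    ← Finset.sum_div, ← Finset.mul_sum, ← Finset.mul_sum, sum_fst_mul_gaugeW hJ, sum_gaugeW_sq hJ]
  field_simp
  ring

end GaugeDerivatives

section Composition

variable {J : Fin k → Matrix (Fin m) (Fin m) ℝ} {u v : Pt m k → ℝ} {φ : ℝ → ℝ} {x : Pt m k}

theorem differentiableAt_hGradSq (hXu : ∀ i, DifferentiableAt ℝ (XD J u i) x) :
    DifferentiableAt ℝ (hGradSq J u) x := by
  unfold hGradSq
  fun_prop

theorem hGradSq_comp (hφ : DifferentiableAt ℝ φ (v x)) (hv : DifferentiableAt ℝ v x) :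
    hGradSq J (fun y => φ (v y)) x = deriv φ (v x) ^ 2 * hGradSq J v x := by
  simp only [hGradSq, XD_comp hφ hv, mul_pow, Finset.mul_sum]

theorem XD_comp_eventuallyEq (hv : ∀ᶠ y in 𝓝 x, DifferentiableAt ℝ v y)
    (hφ : ∀ᶠ y in 𝓝 x, DifferentiableAt ℝ φ (v y)) (i : Fin m) :
    XD J (fun y => φ (v y)) i =ᶠ[𝓝 x] fun y => deriv φ (v y) * XD J v i y := by
  filter_upwards [hv, hφ] with y hvy hφy using XD_comp hφy hvy

theorem differentiableAt_XD_comp (hv : ∀ᶠ y in 𝓝 x, DifferentiableAt ℝ v y)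
    (hφ : ∀ᶠ y in 𝓝 x, DifferentiableAt ℝ φ (v y)) (hφ' : DifferentiableAt ℝ (deriv φ) (v x))
    {i : Fin m} (hXv : DifferentiableAt ℝ (XD J v i) x) :
    DifferentiableAt ℝ (XD J (fun y => φ (v y)) i) x :=
  ((hφ'.comp x hv.self_of_nhds).fun_mul hXv).congr_of_eventuallyEq (XD_comp_eventuallyEq hv hφ i)

theorem hLap_comp (hv : ∀ᶠ y in 𝓝 x, DifferentiableAt ℝ v y)
    (hφ : ∀ᶠ y in 𝓝 x, DifferentiableAt ℝ φ (v y)) (hφ' : DifferentiableAt ℝ (deriv φ) (v x))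
    (hXv : ∀ i, DifferentiableAt ℝ (XD J v i) x) :
    hLap J (fun y => φ (v y)) x =
      deriv (deriv φ) (v x) * hGradSq J v x + deriv φ (v x) * hLap J v x := by
  have hterm (i : Fin m) : XD J (XD J (fun y => φ (v y)) i) i x =
      deriv φ (v x) * XD J (XD J v i) i x + deriv (deriv φ) (v x) * XD J v i x ^ 2 := by
    rw [XD_congr (XD_comp_eventuallyEq hv hφ i),
      XD_mul (f := fun y => deriv φ (v y)) (hφ'.comp x hv.self_of_nhds) (hXv i),
      XD_comp hφ' hv.self_of_nhds]
    ring
  simp only [hLap, hGradSq, hterm, Finset.sum_add_distrib, ← Finset.mul_sum]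
  ring

theorem hInfLap_comp (hv : ∀ᶠ y in 𝓝 x, DifferentiableAt ℝ v y)
    (hφ : ∀ᶠ y in 𝓝 x, DifferentiableAt ℝ φ (v y)) (hφ' : DifferentiableAt ℝ (deriv φ) (v x))
    (hXv : ∀ i, DifferentiableAt ℝ (XD J v i) x) :
    hInfLap J (fun y => φ (v y)) x =
      deriv φ (v x) ^ 2 * deriv (deriv φ) (v x) * hGradSq J v x ^ 2 +
        deriv φ (v x) ^ 3 * hInfLap J v x := by
  have hG : hGradSq J (fun y => φ (v y)) =ᶠ[𝓝 x] fun y => deriv φ (v y) ^ 2 * hGradSq J v y := by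
    filter_upwards [hv, hφ] with y hvy hφy using hGradSq_comp hφy hvy
  have hterm (i : Fin m) :
      XD J (hGradSq J (fun y => φ (v y))) i x * XD J (fun y => φ (v y)) i x =
        deriv φ (v x) ^ 3 * (XD J (hGradSq J v) i x * XD J v i x) +
          2 * deriv φ (v x) ^ 2 * deriv (deriv φ) (v x) * hGradSq J v x * XD J v i x ^ 2 := by
    have hφ'v : DifferentiableAt ℝ (fun y => deriv φ (v y)) x := hφ'.comp x hv.self_of_nhds
    rw [XD_congr hG, XD_mul (hφ'v.fun_pow 2) (differentiableAt_hGradSq hXv), XD_pow hφ'v,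
      XD_comp hφ' hv.self_of_nhds,
      XD_comp hφ.self_of_nhds hv.self_of_nhds]
    push_cast
    ring
  simp only [hInfLap, hGradSq, hterm, Finset.sum_add_distrib, ← Finset.mul_sum]
  ring

theorem hPLap_eq (hXu : ∀ i, DifferentiableAt ℝ (XD J u i) x) (hG : 0 < hGradSq J u x) (p : ℝ) :
    hPLap J p u x = hGradSq J u x ^ ((p - 2) / 2) *
      (hLap J u x + (p - 2) * hInfLap J u x / hGradSq J u x) := by
  have hGd := differentiableAt_hGradSq hXu
  have hterm (i : Fin m) :
      XD J (fun y => hGradSq J u y ^ ((p - 2) / 2) * XD J u i y) i x =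
        hGradSq J u x ^ ((p - 2) / 2) * XD J (XD J u i) i x +
          (p - 2) / 2 * hGradSq J u x ^ ((p - 2) / 2 - 1) *
            (XD J (hGradSq J u) i x * XD J u i x) := by
    rw [XD_mul (hGd.rpow_const (Or.inl hG.ne')) (hXu i),
      XD_comp (φ := fun t => t ^ ((p - 2) / 2))
        (Real.hasDerivAt_rpow_const (Or.inl hG.ne')).differentiableAt hGd,
      Real.deriv_rpow_const]
    ring
  simp only [hPLap, hterm, Finset.sum_add_distrib, ← Finset.mul_sum, hLap, hInfLap,
    Real.rpow_sub_one hG.ne']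
  field_simp

theorem hPLap_comp_of_hInfLap_eq_zero (hv : ∀ᶠ y in 𝓝 x, DifferentiableAt ℝ v y)
    (hφ : ∀ᶠ y in 𝓝 x, DifferentiableAt ℝ φ (v y)) (hφ' : DifferentiableAt ℝ (deriv φ) (v x))
    (hXv : ∀ i, DifferentiableAt ℝ (XD J v i) x) (hφ0 : deriv φ (v x) ≠ 0)
    (hGv : 0 < hGradSq J v x) (hvInf : hInfLap J v x = 0) (p : ℝ) :
    hPLap J p (fun y => φ (v y)) x = |deriv φ (v x)| ^ (p - 2) * hGradSq J v x ^ ((p - 2) / 2) *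
      ((p - 1) * deriv (deriv φ) (v x) * hGradSq J v x + deriv φ (v x) * hLap J v x) := by
  have hG := hGradSq_comp (J := J) hφ.self_of_nhds hv.self_of_nhds
  rw [hPLap_eq (fun i => differentiableAt_XD_comp hv hφ hφ' (hXv i)) (by rw [hG]; positivity),
    hLap_comp hv hφ hφ' hXv, hInfLap_comp hv hφ hφ' hXv, hG, hvInf,
    Real.mul_rpow (by positivity) hGv.le, ← sq_abs, ← Real.rpow_natCast,
    ← Real.rpow_mul (abs_nonneg _)]
  field_simp
  ring_nf

end Composition

theorem pLaplacian_gauge_scalar_identity {p : ℝ} (a b c : ℝ) {r n : ℝ} (hp : p ≠ 1) (hr : 0 < r)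
    (hn : 0 < n) :
    |a| ^ (p - 2) * (r ^ 2 / n ^ 2) ^ ((p - 2) / 2) *
        ((p - 1) * b * (r ^ 2 / n ^ 2) + a * (c * r ^ 2 / n ^ 3)) =
      (p - 1) * (|a| ^ (p - 2) / n ^ p) * (b + c / (p - 1) * a / n) * r ^ p := by
  have hrn : 0 < r / n := div_pos hr hn
  have hpow : ((r / n) ^ 2) ^ ((p - 2) / 2) * (r / n) ^ 2 = r ^ p / n ^ p := by
    rw [← Real.rpow_natCast, ← Real.rpow_mul hrn.le, ← Real.rpow_add hrn,
      ← Real.div_rpow hr.le hn.le]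
    congr 1
    push_cast
    ring
  have hp1 : p - 1 ≠ 0 := sub_ne_zero.2 hp
  calc _ = |a| ^ (p - 2) * (((r / n) ^ 2) ^ ((p - 2) / 2) * (r / n) ^ 2) *
        ((p - 1) * b + c * a / n) := by
        rw [div_pow]
        field_simp
    _ = _ := by
        rw [hpow]
        field_simp

theorem p_laplacian_of_radial_function_general
    (J : Fin k → Matrix (Fin m) (Fin m) ℝ) (hJ : HType J)
    (p : ℝ) (hp : 1 < p)
    (F : ℝ → ℝ) (U : Set ℝ) (hUopen : IsOpen U)
    (hF : ContDiffOn ℝ 2 F U)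
    (x : Pt m k) (hz : x.1 ≠ 0) (hNU : gaugeN x ∈ U)
    (hF' : deriv F (gaugeN x) ≠ 0) :
    hPLap J p (fun y => F (gaugeN y)) x =
      (p - 1) * (|deriv F (gaugeN x)| ^ (p - 2) / (gaugeN x) ^ p) *
        (deriv (deriv F) (gaugeN x)
          + (((m : ℝ) + 2 * k - 1) / (p - 1)) * deriv F (gaugeN x) / gaugeN x) *
        ‖x.1‖ ^ p := by
  have hx : x ≠ 0 := fun h => hz (congrArg Prod.fst h)
  have hF_diff : ∀ᶠ t in 𝓝 (gaugeN x), DifferentiableAt ℝ F t := by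
    filter_upwards [hUopen.mem_nhds hNU] with t ht
    exact (hF.differentiableOn (by norm_num)).differentiableAt (hUopen.mem_nhds ht)
  have hF'_diff : DifferentiableAt ℝ (deriv F) (gaugeN x) :=
    ((hF.deriv_of_isOpen (m := 1) hUopen (by norm_num)).differentiableOn
      (by norm_num)).differentiableAt (hUopen.mem_nhds hNU)
  have hN_diff : ∀ᶠ y in 𝓝 x, DifferentiableAt ℝ gaugeN y :=
    eventually_of_mem (isOpen_ne.mem_nhds hx) fun y hy => differentiableAt_gaugeN hy
  have hG : 0 < hGradSq J gaugeN x := by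
    rw [hGradSq_gaugeN hJ hx]
    exact div_pos (pow_pos (norm_pos_iff.2 hz) 2) (pow_pos (gaugeN_pos hx) 2)
  rw [hPLap_comp_of_hInfLap_eq_zero hN_diff
    ((differentiableAt_gaugeN hx).continuousAt.tendsto.eventually hF_diff) hF'_diff
    (fun i => differentiableAt_XD_gaugeN hx) hF' hG (hInfLap_gaugeN hJ hx),
    hGradSq_gaugeN hJ hx, hLap_gaugeN hJ hx]
  exact pLaplacian_gauge_scalar_identity _ _ _ hp.ne' (norm_pos_iff.2 hz) (gaugeN_pos hx)

/-- for F of class C² on an open subinterval of (0,∞) and N the Korányi gauge,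
at any point with z ≠ 0, N(x) in the domain of F and F'(N(x)) ≠ 0, one has
Δ_{H,p}(F∘N) = (p−1)(|F'(N)|^{p−2}/N^p)[F''(N) + ((Q−1)/(p−1))F'(N)/N]|z|^p, Q = m+2k. -/
theorem p_laplacian_of_radial_function
    (hm : 1 ≤ m) (hk : 1 ≤ k)
    (J : Fin k → Matrix (Fin m) (Fin m) ℝ) (hJ : HType J)
    (p : ℝ) (hp : 1 < p)
    (F : ℝ → ℝ) (U : Set ℝ) (hUopen : IsOpen U) (hUsub : U ⊆ Set.Ioi (0 : ℝ))
    (hF : ContDiffOn ℝ 2 F U)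
    (x : Pt m k) (hz : x.1 ≠ 0) (hNU : gaugeN x ∈ U)
    (hF' : deriv F (gaugeN x) ≠ 0) :
    hPLap J p (fun y => F (gaugeN y)) x =
      (p - 1) * (|deriv F (gaugeN x)| ^ (p - 2) / (gaugeN x) ^ p) *
        (deriv (deriv F) (gaugeN x)
          + (((m : ℝ) + 2 * k - 1) / (p - 1)) * deriv F (gaugeN x) / gaugeN x) *
        ‖x.1‖ ^ p :=
  p_laplacian_of_radial_function_general J hJ p hp F U hUopen hF x hz hNU hF'
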